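/- arXiv:2310.00708 — 3 statements merged into one kernel-verified Lean document; each statement's English description precedes it below -/
import Mathlib

section
/- If ξ̂ satisfies |ξ̂ - ξ_α| < δ where ξ_α minimizes φ_α, then φ_α(ξ̂) - κ_α δ < min_ξ φ_α(ξ) ≤ φ_α(ξ̂), where κ_α = max{(2-α)/(1-α), α/(1-α)}. -/
open MeasureTheory

/-- The Rockafellar–Uryasev function `φ_α`. -/
noncomputable def cvarObjective {Ω : Type*} [MeasurableSpace Ω] (P : Measure Ω) (L : Ω → ℝ)
    (α ξ : ℝ) : ℝ :=
  ξ + (1 / (1 - α)) * ∫ ω, max (L ω - ξ) 0 ∂P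

section

variable {Ω : Type*} [MeasurableSpace Ω] {P : Measure Ω} [IsProbabilityMeasure P] {L : Ω → ℝ}

theorem abs_integral_max_sub_sub_integral_max_sub_le {a b : ℝ}
    (ha : Integrable (fun ω => max (L ω - a) 0) P) (hb : Integrable (fun ω => max (L ω - b) 0) P) :
    |∫ ω, max (L ω - a) 0 ∂P - ∫ ω, max (L ω - b) 0 ∂P| ≤ |a - b| := by
  rw [← integral_sub ha hb]
  have hpoint : ∀ ω, ‖max (L ω - a) 0 - max (L ω - b) 0‖ ≤ |a - b| := fun ω => by
    simpa [abs_sub_comm a b] using abs_max_sub_max_le_abs (L ω - a) (L ω - b) 0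
  simpa using norm_integral_le_of_norm_le_const (μ := P) (Filter.Eventually.of_forall hpoint)

theorem cvarObjective_sub_le {α : ℝ} (hα : α < 1) {a b : ℝ}
    (ha : Integrable (fun ω => max (L ω - a) 0) P) (hb : Integrable (fun ω => max (L ω - b) 0) P) :
    cvarObjective P L α a - cvarObjective P L α b ≤ (2 - α) / (1 - α) * |a - b| := by
  have h1α : 0 < 1 - α := by linarith
  have hκ : (2 - α) / (1 - α) = 1 + 1 / (1 - α) := by field_simp; ring
  have hint := (le_abs_self _).trans (abs_integral_max_sub_sub_integral_max_sub_le ha hb)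
  have hscaled := mul_le_mul_of_nonneg_left hint (one_div_pos.mpr h1α).le
  unfold cvarObjective
  rw [hκ]
  nlinarith [le_abs_self (a - b)]

end

theorem stmt6_general {Ω : Type*} [MeasurableSpace Ω] (P : Measure Ω) [IsProbabilityMeasure P]
    (L : Ω → ℝ) (α : ℝ) (hα : α ∈ Set.Ico (0 : ℝ) 1)
    (hint : ∀ ξ : ℝ, Integrable (fun ω => max (L ω - ξ) 0) P)
    (ξα ξhat δ : ℝ) (hclose : |ξhat - ξα| < δ)
    (hmin : ∀ ξ : ℝ,
      ξα + (1 / (1 - α)) * ∫ ω, max (L ω - ξα) 0 ∂P ≤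
        ξ + (1 / (1 - α)) * ∫ ω, max (L ω - ξ) 0 ∂P) :
    (ξhat + (1 / (1 - α)) * ∫ ω, max (L ω - ξhat) 0 ∂P) -
        max ((2 - α) / (1 - α)) (α / (1 - α)) * δ <
      ξα + (1 / (1 - α)) * ∫ ω, max (L ω - ξα) 0 ∂P ∧
    ξα + (1 / (1 - α)) * ∫ ω, max (L ω - ξα) 0 ∂P ≤
      ξhat + (1 / (1 - α)) * ∫ ω, max (L ω - ξhat) 0 ∂P := by
  refine ⟨?_, hmin ξhat⟩
  have hκ : 0 < (2 - α) / (1 - α) := div_pos (by linarith [hα.2]) (by linarith [hα.2])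
  have hlip := cvarObjective_sub_le (P := P) (L := L) hα.2 (hint ξhat) (hint ξα)
  have hδ : 0 ≤ δ := (abs_nonneg _).trans hclose.le
  calc cvarObjective P L α ξhat - max ((2 - α) / (1 - α)) (α / (1 - α)) * δ
      ≤ cvarObjective P L α ξhat - (2 - α) / (1 - α) * δ := by
        gcongr
        exact le_max_left _ _
    _ < cvarObjective P L α ξα := by nlinarith [mul_lt_mul_of_pos_left hclose hκ]

/-- If `|ξ̂ - ξ_α| < δ` where `ξ_α` minimizes `φ_α`, then
`φ_α(ξ̂) - κ_α δ < min_ξ φ_α(ξ) ≤ φ_α(ξ̂)` with `κ_α = max ((2-α)/(1-α)) (α/(1-α))`. -/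
theorem stmt6 {Ω : Type*} [MeasurableSpace Ω] (P : Measure Ω) [IsProbabilityMeasure P]
    (L : Ω → ℝ) (hL : Integrable L P) (α : ℝ) (hα : α ∈ Set.Ico (0 : ℝ) 1)
    (hint : ∀ ξ : ℝ, Integrable (fun ω => max (L ω - ξ) 0) P)
    (ξα ξhat δ : ℝ) (hδ : 0 < δ) (hclose : |ξhat - ξα| < δ)
    (hmin : ∀ ξ : ℝ,
      ξα + (1 / (1 - α)) * ∫ ω, max (L ω - ξα) 0 ∂P ≤
        ξ + (1 / (1 - α)) * ∫ ω, max (L ω - ξ) 0 ∂P) :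
    (ξhat + (1 / (1 - α)) * ∫ ω, max (L ω - ξhat) 0 ∂P) -
        max ((2 - α) / (1 - α)) (α / (1 - α)) * δ <
      ξα + (1 / (1 - α)) * ∫ ω, max (L ω - ξα) 0 ∂P ∧
    ξα + (1 / (1 - α)) * ∫ ω, max (L ω - ξα) 0 ∂P ≤
      ξhat + (1 / (1 - α)) * ∫ ω, max (L ω - ξhat) 0 ∂P :=
  stmt6_general P L α hα hint ξα ξhat δ hclose hmin
end

section
/- Suppose |ξ̂ - ξ_α| ≤ δ with ξ̂ = ξ_α + δ. Then φ_α(ξ̂) - φ_α(ξ_α) ≤ ((2-α)/(1-α)) δ. -/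
/-! The map `ξ ↦ E[(L - ξ)⁺]` is nonincreasing, so `φ_α(ξ + δ) - φ_α(ξ) ≤ δ` for every `ξ`,
and `δ ≤ ((2 - α)/(1 - α)) δ` since `1 - α ≤ 2 - α`. -/

open MeasureTheory

theorem integral_max_sub_zero_le_of_le {Ω : Type*} [MeasurableSpace Ω] {μ : Measure Ω}
    {L : Ω → ℝ} {ξ η : ℝ} (hξη : ξ ≤ η) (hξ : Integrable (fun ω => max (L ω - ξ) 0) μ) :
    ∫ ω, max (L ω - η) 0 ∂μ ≤ ∫ ω, max (L ω - ξ) 0 ∂μ :=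
  integral_mono_of_nonneg (.of_forall fun _ => le_max_right _ _) hξ
    (.of_forall fun _ => max_le_max (by linarith) le_rfl)

theorem add_mul_integral_max_sub_zero_sub_le {Ω : Type*} [MeasurableSpace Ω] {μ : Measure Ω}
    {L : Ω → ℝ} {c ξ η : ℝ} (hc : 0 ≤ c) (hξη : ξ ≤ η)
    (hξ : Integrable (fun ω => max (L ω - ξ) 0) μ) :
    (η + c * ∫ ω, max (L ω - η) 0 ∂μ) - (ξ + c * ∫ ω, max (L ω - ξ) 0 ∂μ) ≤ η - ξ := by
  have := mul_le_mul_of_nonneg_left (integral_max_sub_zero_le_of_le hξη hξ) hc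
  linarith

theorem stmt7_general {Ω : Type*} [MeasurableSpace Ω] (P : Measure Ω)
    (L : Ω → ℝ) (α : ℝ) (hα : α ∈ Set.Ico (0 : ℝ) 1)
    (hint : ∀ ξ : ℝ, Integrable (fun ω => max (L ω - ξ) 0) P)
    (ξα : ℝ)
    (δ : ℝ) (hδ : 0 ≤ δ) (ξhat : ℝ) (hξhat : ξhat = ξα + δ) :
    (ξhat + (1 / (1 - α)) * ∫ ω, max (L ω - ξhat) 0 ∂P) -
      (ξα + (1 / (1 - α)) * ∫ ω, max (L ω - ξα) 0 ∂P) ≤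
    ((2 - α) / (1 - α)) * δ := by
  have h1α : 0 < 1 - α := by linarith [hα.2]
  have hgrowth := add_mul_integral_max_sub_zero_sub_le (L := L) (μ := P)
    (one_div_nonneg.2 h1α.le) (show ξα ≤ ξhat by linarith) (hint ξα)
  have hfactor : 1 ≤ (2 - α) / (1 - α) := by rw [le_div_iff₀ h1α]; linarith
  calc _ ≤ ξhat - ξα := hgrowth
    _ = δ := by rw [hξhat]; ring
    _ ≤ ((2 - α) / (1 - α)) * δ := le_mul_of_one_le_left hδ hfactor

/-- Upward perturbation: with `ξ̂ = ξ_α + δ`, `φ_α(ξ̂) - φ_α(ξ_α) ≤ ((2-α)/(1-α)) δ`,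
where `ξ_α = VaR_α(L)`. -/
theorem stmt7 {Ω : Type*} [MeasurableSpace Ω] (P : Measure Ω) [IsProbabilityMeasure P]
    (L : Ω → ℝ) (hL : Integrable L P) (α : ℝ) (hα : α ∈ Set.Ico (0 : ℝ) 1)
    (hint : ∀ ξ : ℝ, Integrable (fun ω => max (L ω - ξ) 0) P)
    (ξα : ℝ) (hVaR : ξα = sInf {l : ℝ | α ≤ (P {ω | L ω ≤ l}).toReal})
    (δ : ℝ) (hδ : 0 ≤ δ) (ξhat : ℝ) (hξhat : ξhat = ξα + δ) :
    (ξhat + (1 / (1 - α)) * ∫ ω, max (L ω - ξhat) 0 ∂P) -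
      (ξα + (1 / (1 - α)) * ∫ ω, max (L ω - ξα) 0 ∂P) ≤
    ((2 - α) / (1 - α)) * δ :=
  stmt7_general P L α hα hint ξα δ hδ ξhat hξhat
end

section
/- Suppose ξ̂ = ξ_α - δ for δ ≥ 0. Then φ_α(ξ̂) - φ_α(ξ_α) ≤ (α/(1-α)) δ. -/
/-!
Lowering `ξ` by `δ` lowers the linear term of `φ_α` by `δ`, while the positive part being
monotone and 1-Lipschitz raises `E[(L - ξ)⁺]` by at most `δ`; after the factor `1/(1-α)` the
net change is at most `-δ + δ/(1-α) = α δ/(1-α)`.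
-/

open MeasureTheory

/-- The paper's `φ_α`. -/
noncomputable def rockafellarUryasev {Ω : Type*} [MeasurableSpace Ω] (P : Measure Ω)
    (L : Ω → ℝ) (α ξ : ℝ) : ℝ :=
  ξ + (1 / (1 - α)) * ∫ ω, max (L ω - ξ) 0 ∂P

lemma max_sub_sub_zero_le {x ξ δ : ℝ} (hδ : 0 ≤ δ) :
    max (x - (ξ - δ)) 0 ≤ max (x - ξ) 0 + δ :=
  max_le (by linarith [le_max_left (x - ξ) 0]) (by linarith [le_max_right (x - ξ) 0])

section

variable {Ω : Type*} [MeasurableSpace Ω] {P : Measure Ω} [IsProbabilityMeasure P] {L : Ω → ℝ}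

lemma integral_max_sub_sub_zero_le {ξ δ : ℝ} (hδ : 0 ≤ δ)
    (hξ : Integrable (fun ω => max (L ω - ξ) 0) P)
    (hξδ : Integrable (fun ω => max (L ω - (ξ - δ)) 0) P) :
    ∫ ω, max (L ω - (ξ - δ)) 0 ∂P ≤ (∫ ω, max (L ω - ξ) 0 ∂P) + δ :=
  calc ∫ ω, max (L ω - (ξ - δ)) 0 ∂P
      ≤ ∫ ω, (max (L ω - ξ) 0 + δ) ∂P :=
        integral_mono hξδ (hξ.add (integrable_const δ)) fun _ => max_sub_sub_zero_le hδ
    _ = (∫ ω, max (L ω - ξ) 0 ∂P) + δ := by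
        rw [integral_add hξ (integrable_const δ), integral_const, probReal_univ, one_smul]

lemma rockafellarUryasev_sub_sub_le {α ξ δ : ℝ} (hα : α < 1) (hδ : 0 ≤ δ)
    (hξ : Integrable (fun ω => max (L ω - ξ) 0) P)
    (hξδ : Integrable (fun ω => max (L ω - (ξ - δ)) 0) P) :
    rockafellarUryasev P L α (ξ - δ) - rockafellarUryasev P L α ξ ≤ α / (1 - α) * δ := by
  have hα' : 0 < 1 - α := sub_pos.mpr hα
  have hexcess := mul_le_mul_of_nonneg_left (integral_max_sub_sub_zero_le hδ hξ hξδ)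
    (one_div_nonneg.mpr hα'.le)
  have hcoeff : α / (1 - α) * δ = -δ + 1 / (1 - α) * δ := by
    field_simp
    ring
  rw [rockafellarUryasev, rockafellarUryasev, hcoeff]
  linarith

end

theorem stmt8_general {Ω : Type*} [MeasurableSpace Ω] (P : Measure Ω) [IsProbabilityMeasure P]
    (L : Ω → ℝ) (α : ℝ) (hα : α ∈ Set.Ico (0 : ℝ) 1)
    (hint : ∀ ξ : ℝ, Integrable (fun ω => max (L ω - ξ) 0) P)
    (ξα : ℝ)
    (δ : ℝ) (hδ : 0 ≤ δ) (ξhat : ℝ) (hξhat : ξhat = ξα - δ) :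
    (ξhat + (1 / (1 - α)) * ∫ ω, max (L ω - ξhat) 0 ∂P) -
      (ξα + (1 / (1 - α)) * ∫ ω, max (L ω - ξα) 0 ∂P) ≤
    (α / (1 - α)) * δ := by
  subst hξhat
  exact rockafellarUryasev_sub_sub_le hα.2 hδ (hint ξα) (hint (ξα - δ))

/-- Downward perturbation: with `ξ̂ = ξ_α - δ`, `φ_α(ξ̂) - φ_α(ξ_α) ≤ (α/(1-α)) δ`,
where `ξ_α = VaR_α(L)`. -/
theorem stmt8 {Ω : Type*} [MeasurableSpace Ω] (P : Measure Ω) [IsProbabilityMeasure P]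
    (L : Ω → ℝ) (hL : Integrable L P) (α : ℝ) (hα : α ∈ Set.Ico (0 : ℝ) 1)
    (hint : ∀ ξ : ℝ, Integrable (fun ω => max (L ω - ξ) 0) P)
    (ξα : ℝ) (hVaR : ξα = sInf {l : ℝ | α ≤ (P {ω | L ω ≤ l}).toReal})
    (δ : ℝ) (hδ : 0 ≤ δ) (ξhat : ℝ) (hξhat : ξhat = ξα - δ) :
    (ξhat + (1 / (1 - α)) * ∫ ω, max (L ω - ξhat) 0 ∂P) -
      (ξα + (1 / (1 - α)) * ∫ ω, max (L ω - ξα) 0 ∂P) ≤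
    (α / (1 - α)) * δ :=
  stmt8_general P L α hα hint ξα δ hδ ξhat hξhat
end
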